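/- Let σ² > 0, L ≥ 2 an integer, c₁, …, c_L > 0, c₀ = (Σ_{ℓ=1}^L 1/c_ℓ)⁻¹, and γ > σ²·max(√c₁, …, √c_L). Let Υ be the (L+1)×(L+1) real symmetric matrix indexed by 0, …, L with diagonal entries Υ_{ℓℓ} = c_ℓγ²(γ + σ²)²/(γ² − σ⁴c_ℓ) for ℓ = 0, …, L, off-diagonal entries Υ_{0ℓ} = Υ_{ℓ0} = c₀γ²(γ + σ²)²/(γ² − σ⁴c₀) for ℓ = 1, …, L, and all other entries zero. Let H̃ be the L×(L+1) real matrix whose ℓ-th row (ℓ = 1, …, L) has entry 1 in column 0, entry −1 in column ℓ, and 0 elsewhere. Then Υ is positive definite and H̃ Υ H̃ᵀ is positive definite; in particular H̃ Υ H̃ᵀ is nonsingular. -/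

import Mathlib

/-!
With `s = σ²`, `Υ` is an arrowhead matrix: corner `a = f(c₀)`, remaining diagonal `dₗ = f(cₗ)`
and `a` along the rest of row and column `0`, where `f = spikeVariance`,
`f(t) = t γ² (γ + s)² / (γ² - s² t)`.
Completing the square in the last `L` coordinates leaves the Schur complement
`a² (a⁻¹ - ∑ dₗ⁻¹) x₀²`, so `Υ` is positive definite as soon as all `dₗ > 0` and `∑ dₗ⁻¹ < a⁻¹`.
The reciprocal `1/f(t) = (γ²/t - s²) / (γ² (γ + s)²)` is affine in `1/t` and `1/c₀ = ∑ 1/cₗ`,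
so `a⁻¹ - ∑ dₗ⁻¹ = (L - 1) s² / (γ² (γ + s)²) > 0`. Finally `H̃ᵀ` is injective, so `H̃ Υ H̃ᵀ`
is positive definite by congruence.
-/

open scoped Matrix

namespace Matrix

variable {R : Type*} {n : ℕ}

def arrowhead [Zero R] (a : R) (d : Fin n → R) : Matrix (Fin (n + 1)) (Fin (n + 1)) R :=
  of fun i j => if i = j then Fin.cases a d i else if i = 0 ∨ j = 0 then a else 0

lemma isSymm_arrowhead [Zero R] (a : R) (d : Fin n → R) : (arrowhead a d).IsSymm := by
  ext i j
  simp only [transpose_apply, arrowhead, of_apply]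
  by_cases h : i = j
  · subst h; rfl
  · simp [h, Ne.symm h, or_comm]

lemma dotProduct_arrowhead_mulVec [CommRing R] (a : R) (d : Fin n → R) (x : Fin (n + 1) → R) :
    x ⬝ᵥ (arrowhead a d *ᵥ x) =
      a * x 0 ^ 2 + 2 * a * x 0 * ∑ i : Fin n, x i.succ + ∑ i : Fin n, d i * x i.succ ^ 2 := by
  simp only [dotProduct, mulVec, arrowhead, of_apply, Fin.sum_univ_succ, Fin.cases_zero,
    Fin.cases_succ, Fin.succ_ne_zero, (Fin.succ_ne_zero _).symm, Fin.succ_inj, if_true,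
    or_true, or_false, if_false, ite_mul, zero_mul, Finset.sum_ite_eq,
    Finset.mem_univ]
  have hrow (i : Fin n) :
      x i.succ * (a * x 0 + d i * x i.succ) = a * x 0 * x i.succ + d i * x i.succ ^ 2 := by ring
  simp only [hrow, Finset.sum_add_distrib, ← Finset.mul_sum]
  ring

lemma arrowhead_form_eq_sum_sq_add [Field R] (a : R) {d : Fin n → R} (hd : ∀ i, d i ≠ 0)
    (x₀ : R) (y : Fin n → R) :
    a * x₀ ^ 2 + 2 * a * x₀ * ∑ i, y i + ∑ i, d i * y i ^ 2 =
      ∑ i, d i * (y i + a * x₀ / d i) ^ 2 + a ^ 2 * (a⁻¹ - ∑ i, (d i)⁻¹) * x₀ ^ 2 := by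
  have hterm (i : Fin n) : d i * (y i + a * x₀ / d i) ^ 2 =
      d i * y i ^ 2 + 2 * a * x₀ * y i + a ^ 2 * x₀ ^ 2 * (d i)⁻¹ := by
    field_simp [hd i]
    ring
  have ha : a ^ 2 * a⁻¹ = a := by
    rcases eq_or_ne a 0 with rfl | ha
    · simp
    · field_simp
  simp only [hterm, Finset.sum_add_distrib, ← Finset.mul_sum]
  linear_combination (-x₀ ^ 2) * ha

lemma posDef_arrowhead {a : ℝ} {d : Fin n → ℝ} (hd : ∀ i, 0 < d i)
    (hschur : ∑ i, (d i)⁻¹ < a⁻¹) : (arrowhead a d).PosDef := by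
  have hsum : 0 ≤ ∑ i, (d i)⁻¹ := Finset.sum_nonneg fun i _ => (inv_pos.2 (hd i)).le
  have ha : 0 < a := inv_pos.1 (hsum.trans_lt hschur)
  refine PosDef.of_dotProduct_mulVec_pos (isHermitian_iff_isSymm.2 (isSymm_arrowhead a d))
    fun x hx => ?_
  rw [star_trivial, dotProduct_arrowhead_mulVec,
    arrowhead_form_eq_sum_sq_add a (fun i => (hd i).ne')]
  have hsq : 0 ≤ ∑ i, d i * (x i.succ + a * x 0 / d i) ^ 2 :=
    Finset.sum_nonneg fun i _ => mul_nonneg (hd i).le (sq_nonneg _)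
  rcases eq_or_ne (x 0) 0 with h0 | h0
  · obtain ⟨i, hi⟩ : ∃ i, x (Fin.succ i) ≠ 0 := by
      by_contra! hy
      exact hx (funext fun j => Fin.cases h0 hy j)
    have hpos : 0 < ∑ i, d i * (x i.succ + a * x 0 / d i) ^ 2 :=
      Finset.sum_pos' (fun j _ => mul_nonneg (hd j).le (sq_nonneg _))
        ⟨i, Finset.mem_univ i, by
          rw [h0, mul_zero, zero_div, add_zero]
          exact mul_pos (hd i) (sq_pos_of_ne_zero hi)⟩
    simpa [h0] using hpos
  · have : 0 < a ^ 2 * (a⁻¹ - ∑ i, (d i)⁻¹) * x 0 ^ 2 := by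
      have := sub_pos.2 hschur
      positivity
    linarith

end Matrix

section SpikeVariance

noncomputable def spikeVariance (s γ t : ℝ) : ℝ := t * γ ^ 2 * (γ + s) ^ 2 / (γ ^ 2 - s ^ 2 * t)

variable {s γ t : ℝ}

lemma spikeVariance_pos (ht : 0 < t) (hγs : γ + s ≠ 0) (hlt : s ^ 2 * t < γ ^ 2) :
    0 < spikeVariance s γ t := by
  have hγ : γ ≠ 0 := by
    rintro rfl
    nlinarith [sq_nonneg s]
  unfold spikeVariance
  have := sub_pos.2 hlt
  positivity

lemma inv_spikeVariance (ht : t ≠ 0) :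
    (spikeVariance s γ t)⁻¹ = (γ ^ 2 * t⁻¹ - s ^ 2) / (γ ^ 2 * (γ + s) ^ 2) := by
  unfold spikeVariance
  rw [inv_div]
  field_simp

lemma sum_inv_spikeVariance_lt {L : ℕ} (hL : 1 < L) {c : Fin L → ℝ} (hc : ∀ ℓ, 0 < c ℓ)
    (hs : s ≠ 0) (hγ : γ ≠ 0) (hγs : γ + s ≠ 0) :
    ∑ ℓ, (spikeVariance s γ (c ℓ))⁻¹ < (spikeVariance s γ (∑ ℓ, (c ℓ)⁻¹)⁻¹)⁻¹ := by
  have hS : 0 < ∑ ℓ, (c ℓ)⁻¹ :=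
    Finset.sum_pos (fun ℓ _ => inv_pos.2 (hc ℓ)) ⟨⟨0, by omega⟩, Finset.mem_univ _⟩
  simp only [inv_spikeVariance (hc _).ne', inv_spikeVariance (inv_ne_zero hS.ne'), inv_inv,
    ← Finset.sum_div, Finset.sum_sub_distrib, ← Finset.mul_sum, Finset.sum_const,
    Finset.card_univ, Fintype.card_fin, nsmul_eq_mul]
  have hL' : (1 : ℝ) < L := by exact_mod_cast hL
  gcongr ?_ / _
  nlinarith [sq_pos_of_ne_zero hs]

end SpikeVariance

namespace Matrix

def differencing (R : Type*) [Zero R] [One R] [Neg R] (L : ℕ) : Matrix (Fin L) (Fin (L + 1)) R :=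
  of fun ℓ j => if j = 0 then 1 else if j = ℓ.succ then -1 else 0

variable {R : Type*} [Ring R] {L : ℕ}

lemma vecMul_differencing_succ (y : Fin L → R) (ℓ : Fin L) :
    (y ᵥ* differencing R L) ℓ.succ = -y ℓ := by
  simp [vecMul, dotProduct, differencing, (Fin.succ_ne_zero ℓ).symm, eq_comm (a := ℓ.succ)]

lemma vecMul_differencing_injective : Function.Injective (differencing R L).vecMul :=
  fun y z h => funext fun ℓ => by
    simpa [vecMul_differencing_succ] using congr_fun h ℓ.succ

end Matrix

open Matrix in
/-- for `L ≥ 2`, `c₁, …, c_L > 0`, `c₀ = (Σ 1/c_ℓ)⁻¹` and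
`γ > σ²·max(√c₁, …, √c_L)`, the matrix `Υ` is positive definite, `H̃ Υ H̃ᵀ` is positive
definite, and in particular `H̃ Υ H̃ᵀ` is nonsingular. -/
theorem Upsilon_and_HUpsilonHT_posDef (s : ℝ) (hs : 0 < s) (L : ℕ) (hL : 2 ≤ L)
    (c : Fin L → ℝ) (hc : ∀ ℓ, 0 < c ℓ) (γ : ℝ)
    (hγ : ∀ ℓ, s * Real.sqrt (c ℓ) < γ) :
    ∀ c₀ : ℝ, c₀ = (∑ ℓ, (c ℓ)⁻¹)⁻¹ →
    ∀ cc : Fin (L + 1) → ℝ, cc = Fin.cases c₀ c →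
    ∀ Υ : Matrix (Fin (L + 1)) (Fin (L + 1)) ℝ,
      Υ = Matrix.of (fun i j =>
        if i = j then cc i * γ ^ 2 * (γ + s) ^ 2 / (γ ^ 2 - s ^ 2 * cc i)
        else if i = 0 ∨ j = 0 then c₀ * γ ^ 2 * (γ + s) ^ 2 / (γ ^ 2 - s ^ 2 * c₀)
        else 0) →
    ∀ H : Matrix (Fin L) (Fin (L + 1)) ℝ,
      H = Matrix.of (fun ℓ j => if j = 0 then 1 else if j = ℓ.succ then -1 else 0) →
    Υ.PosDef ∧ (H * Υ * H.transpose).PosDef ∧ (H * Υ * H.transpose).det ≠ 0 := by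
  intro c₀ hc₀ cc hcc Υ hΥ H hH
  have hγ₀ : 0 < γ := (mul_pos hs (Real.sqrt_pos.2 (hc ⟨0, by omega⟩))).trans (hγ _)
  have hγs : γ + s ≠ 0 := by positivity
  have hlt (ℓ : Fin L) : s ^ 2 * c ℓ < γ ^ 2 := by
    simpa [mul_pow, Real.sq_sqrt (hc ℓ).le] using
      pow_lt_pow_left₀ (hγ ℓ) (by positivity) two_ne_zero
  have hΥ_eq : Υ = arrowhead (spikeVariance s γ c₀) fun ℓ => spikeVariance s γ (c ℓ) := by
    subst hΥ hcc
    ext i j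
    cases i using Fin.cases <;> rfl
  have hΥ_pd : Υ.PosDef := by
    rw [hΥ_eq, hc₀]
    exact posDef_arrowhead (fun ℓ => spikeVariance_pos (hc ℓ) hγs (hlt ℓ))
      (sum_inv_spikeVariance_lt hL hc hs.ne' hγ₀.ne' hγs)
  have hHΥH_pd : (H * Υ * H.transpose).PosDef := by
    rw [← conjTranspose_eq_transpose_of_trivial]
    exact hΥ_pd.mul_mul_conjTranspose_same (hH ▸ vecMul_differencing_injective)
  exact ⟨hΥ_pd, hHΥH_pd, hHΥH_pd.det_pos.ne'⟩
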